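/- In a summable category, a finite family of morphisms (f_i)_{i=1}^n in L(X,Y) is summable if and only if for every permutation p of {1,…,n} the permuted family (f_{p(i)})_{i=1}^n is summable, and in that case the sums coincide. -/

import Mathlib

/-!
Associativity of binary sums comes from (S-wit) by a Fubini argument: a morphism
`X ⟶ S (S Y)` is a 2×2 matrix, and by naturality of `σ` the sum of its row sums equals the sum
of its column sums. Together with (S-com) this gives `f + (g + h) = g + (f + h)`, which is what
swapping two adjacent terms of a family needs; adjacent swaps generate all permutations, and
the sum of a family is unique because it can be peeled off from the front.
-/

open CategoryTheory Limits

universe v u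

/-- A pre-summability structure on a category enriched over pointed sets
(rendered via zero morphisms): a functor S preserving zero morphisms with
three natural transformations π0, π1, σ to the identity such that π0, π1
are jointly monic. -/
structure PreSummability (L : Type u) [Category.{v} L] [HasZeroMorphisms L] where
  S : L ⥤ L
  p0 : S ⟶ 𝟭 L
  p1 : S ⟶ 𝟭 L
  sg : S ⟶ 𝟭 L
  S_zero : ∀ (X Y : L), S.map (0 : X ⟶ Y) = 0
  jointly_monic : ∀ {X Y : L} (f g : X ⟶ S.obj Y),
    f ≫ p0.app Y = g ≫ p0.app Y → f ≫ p1.app Y = g ≫ p1.app Y → f = g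

variable {L : Type u} [Category.{v} L] [HasZeroMorphisms L]

/-- `w` is the witness of summability of `f0` and `f1`. -/
def PreSummability.IsWitness (P : PreSummability L) {X Y : L}
    (f0 f1 : X ⟶ Y) (w : X ⟶ P.S.obj Y) : Prop :=
  w ≫ P.p0.app Y = f0 ∧ w ≫ P.p1.app Y = f1

/-- `f0` and `f1` are summable. -/
def PreSummability.Summable (P : PreSummability L) {X Y : L} (f0 f1 : X ⟶ Y) : Prop :=
  ∃ w, P.IsWitness f0 f1 w

/-- `s` is the sum `f0 + f1` of the summable pair `(f0, f1)`. -/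
def PreSummability.IsSum (P : PreSummability L) {X Y : L} (f0 f1 s : X ⟶ Y) : Prop :=
  ∃ w, P.IsWitness f0 f1 w ∧ w ≫ P.sg.app Y = s

/-- A summability structure: a pre-summability structure satisfying the axioms
(S-com), (S-zero), (S-wit) and (S-ass). In (S-ass) the flip `c` is
characterized by the equations π_i ∘ π_j ∘ c = π_j ∘ π_i. -/
structure SummabilityStructure (L : Type u) [Category.{v} L] [HasZeroMorphisms L]
    extends PreSummability L where
  ax_com : ∀ X : L, ∃ w : S.obj X ⟶ S.obj X,
    toPreSummability.IsWitness (p1.app X) (p0.app X) w ∧ w ≫ sg.app X = sg.app X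
  ax_zero : ∀ {X Y : L} (f : X ⟶ Y), toPreSummability.IsSum f 0 f
  ax_wit : ∀ {X Y : L} (w0 w1 : X ⟶ S.obj Y),
    toPreSummability.Summable (w0 ≫ sg.app Y) (w1 ≫ sg.app Y) →
    toPreSummability.Summable w0 w1
  ax_ass : ∀ (X : L) (c : S.obj (S.obj X) ⟶ S.obj (S.obj X)),
    (c ≫ p0.app (S.obj X) ≫ p0.app X = p0.app (S.obj X) ≫ p0.app X) →
    (c ≫ p0.app (S.obj X) ≫ p1.app X = p1.app (S.obj X) ≫ p0.app X) →
    (c ≫ p1.app (S.obj X) ≫ p0.app X = p0.app (S.obj X) ≫ p1.app X) →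
    (c ≫ p1.app (S.obj X) ≫ p1.app X = p1.app (S.obj X) ≫ p1.app X) →
    c ≫ S.map (sg.app X) = sg.app (S.obj X)

/-- `IsSumList P l s`: the finite family (list) `l` is summable with sum `s`,
defined inductively: the empty family has sum 0; `l ++ [f]` is summable with
sum `t` if `l` is summable with a sum `s'` and `(s', f)` is summable with sum `t`. -/
inductive IsSumList (P : PreSummability L) : ∀ {X Y : L}, List (X ⟶ Y) → (X ⟶ Y) → Prop
  | nil {X Y : L} : IsSumList P ([] : List (X ⟶ Y)) 0
  | snoc {X Y : L} (l : List (X ⟶ Y)) (s f t : X ⟶ Y) :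
      IsSumList P l s → P.IsSum s f t → IsSumList P (l ++ [f]) t

theorem CategoryTheory.NatTrans.naturality_toId {C : Type*} [Category C] {F : C ⥤ C}
    (α : F ⟶ 𝟭 C) {Z Y : C} (g : Z ⟶ Y) : F.map g ≫ α.app Y = α.app Z ≫ g :=
  α.naturality g

namespace PreSummability

theorem IsWitness.unique {P : PreSummability L} {X Y : L} {f0 f1 : X ⟶ Y}
    {w w' : X ⟶ P.S.obj Y} (h : P.IsWitness f0 f1 w) (h' : P.IsWitness f0 f1 w') : w = w' :=
  P.jointly_monic w w' (h.1.trans h'.1.symm) (h.2.trans h'.2.symm)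

theorem IsSum.unique {P : PreSummability L} {X Y : L} {f0 f1 s s' : X ⟶ Y}
    (h : P.IsSum f0 f1 s) (h' : P.IsSum f0 f1 s') : s = s' := by
  obtain ⟨w, hw, rfl⟩ := h
  obtain ⟨w', hw', rfl⟩ := h'
  rw [hw.unique hw']

variable (P : PreSummability L)

theorem isWitness_comp_map {X Y Z : L} (W : X ⟶ P.S.obj Z) (g : Z ⟶ Y) :
    P.IsWitness ((W ≫ P.p0.app Z) ≫ g) ((W ≫ P.p1.app Z) ≫ g) (W ≫ P.S.map g) :=
  ⟨by rw [Category.assoc, Category.assoc, P.p0.naturality_toId],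
    by rw [Category.assoc, Category.assoc, P.p1.naturality_toId]⟩

theorem isSum_comp_map {X Y Z : L} (W : X ⟶ P.S.obj Z) (g : Z ⟶ Y) :
    P.IsSum ((W ≫ P.p0.app Z) ≫ g) ((W ≫ P.p1.app Z) ≫ g) (W ≫ P.S.map g ≫ P.sg.app Y) :=
  ⟨_, P.isWitness_comp_map W g, Category.assoc _ _ _⟩

/-- Reading `W` as the 2×2 matrix `W ≫ pᵢ ≫ pⱼ`, the column sums add up to the sum of the row
sums (compare `isSum_comp_map W σ`). -/
theorem isSum_columns {X Y : L} (W : X ⟶ P.S.obj (P.S.obj Y)) :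
    P.IsSum (W ≫ P.S.map (P.p0.app Y) ≫ P.sg.app Y) (W ≫ P.S.map (P.p1.app Y) ≫ P.sg.app Y)
      (W ≫ P.S.map (P.sg.app Y) ≫ P.sg.app Y) :=
  ⟨W ≫ P.sg.app (P.S.obj Y),
    ⟨by simp only [Category.assoc, NatTrans.naturality_toId, Functor.id_obj],
      by simp only [Category.assoc, NatTrans.naturality_toId, Functor.id_obj]⟩,
    by simp only [Category.assoc, NatTrans.naturality_toId, Functor.id_obj]⟩

end PreSummability

namespace PreSummability.IsSum

variable {Q : SummabilityStructure L}

theorem comm {X Y : L} {f0 f1 s : X ⟶ Y}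
    (h : Q.IsSum f0 f1 s) : Q.IsSum f1 f0 s := by
  obtain ⟨w, ⟨h0, h1⟩, hs⟩ := h
  obtain ⟨c, ⟨hc0, hc1⟩, hcs⟩ := Q.ax_com Y
  dsimp only [Functor.id_obj] at hc0 hc1 hcs
  exact ⟨w ≫ c, ⟨by rw [Category.assoc, hc0, h1], by rw [Category.assoc, hc1, h0]⟩,
    by rw [Category.assoc, hcs, hs]⟩

end PreSummability.IsSum

theorem SummabilityStructure.isSum_zero_left (Q : SummabilityStructure L) {X Y : L}
    (f : X ⟶ Y) : Q.IsSum 0 f f :=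
  (Q.ax_zero f).comm

namespace PreSummability.IsSum

variable {Q : SummabilityStructure L}

theorem assoc {X Y : L} {f0 f1 f2 s t : X ⟶ Y}
    (h01 : Q.IsSum f0 f1 s) (h : Q.IsSum s f2 t) :
    ∃ u, Q.IsSum f1 f2 u ∧ Q.IsSum f0 u t := by
  obtain ⟨w01, hw01, rfl⟩ := h01
  obtain ⟨w, hw, rfl⟩ := h
  obtain ⟨z, hz, hzs⟩ := Q.isSum_zero_left f2
  -- the matrix with rows `(f0, f1)` and `(0, f2)`
  obtain ⟨W, hW0, hW1⟩ := Q.ax_wit w01 z ⟨w, hw.1, hw.2.trans hzs.symm⟩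
  have hrows := Q.isSum_comp_map W (Q.sg.app Y)
  have hcol0 := Q.isSum_comp_map W (Q.p0.app Y)
  have hcol1 := Q.isSum_comp_map W (Q.p1.app Y)
  dsimp only [Functor.id_obj] at hrows hcol0 hcol1
  rw [hW0, hW1, hzs] at hrows
  rw [hW0, hW1, hw01.1, hz.1] at hcol0
  rw [hW0, hW1, hw01.2, hz.2] at hcol1
  have htotal := Q.isSum_columns W
  rw [hcol0.unique (Q.ax_zero _), hrows.unique ⟨w, hw, rfl⟩] at htotal
  exact ⟨_, hcol1, htotal⟩

theorem assoc_symm {X Y : L} {f0 f1 f2 u t : X ⟶ Y}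
    (h12 : Q.IsSum f1 f2 u) (h : Q.IsSum f0 u t) :
    ∃ s, Q.IsSum f0 f1 s ∧ Q.IsSum s f2 t := by
  obtain ⟨s, h10, h2⟩ := h12.comm.assoc h.comm
  exact ⟨s, h10.comm, h2.comm⟩

theorem left_comm {X Y : L} {f0 f1 f2 u t : X ⟶ Y}
    (h12 : Q.IsSum f1 f2 u) (h : Q.IsSum f0 u t) :
    ∃ v, Q.IsSum f0 f2 v ∧ Q.IsSum f1 v t := by
  obtain ⟨s, h01, h2⟩ := h12.assoc_symm h
  exact h01.comm.assoc h2

end PreSummability.IsSum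

namespace IsSumList

theorem eq_zero_of_nil {P : PreSummability L} {X Y : L} {s : X ⟶ Y}
    (h : IsSumList P ([] : List (X ⟶ Y)) s) : s = 0 := by
  generalize hl : ([] : List (X ⟶ Y)) = l at h
  cases h with
  | nil => rfl
  | snoc => simp at hl

variable {Q : SummabilityStructure L}

theorem cons {X Y : L} {l : List (X ⟶ Y)} {s : X ⟶ Y} (h : IsSumList Q.toPreSummability l s)
    {f t : X ⟶ Y} (hf : Q.IsSum f s t) : IsSumList Q.toPreSummability (f :: l) t := by
  induction h generalizing t with
  | nil =>
    rw [hf.unique (Q.ax_zero f)]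
    exact snoc [] 0 f f nil (Q.isSum_zero_left f)
  | snoc l s g u _ hg ih =>
    obtain ⟨v, hv, hvg⟩ := hg.assoc_symm hf
    exact snoc (f :: l) v g t (ih hv) hvg

theorem exists_of_cons {X Y : L} {f t : X ⟶ Y} {l : List (X ⟶ Y)}
    (h : IsSumList Q.toPreSummability (f :: l) t) :
    ∃ s, IsSumList Q.toPreSummability l s ∧ Q.IsSum f s t := by
  generalize hl : f :: l = l₀ at h
  induction h generalizing l with
  | nil => simp at hl
  | snoc l₁ s g t h₁ hg ih =>
    cases l₁ with
    | nil =>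
      obtain ⟨rfl, rfl⟩ : f = g ∧ l = [] := by simpa using hl
      rw [h₁.eq_zero_of_nil] at hg
      rw [hg.unique (Q.isSum_zero_left f)]
      exact ⟨0, nil, Q.ax_zero f⟩
    | cons a l₁ =>
      obtain ⟨rfl, rfl⟩ : f = a ∧ l = l₁ ++ [g] := by simpa using hl
      obtain ⟨s', hs', hfs'⟩ := ih rfl
      obtain ⟨v, hv, hfv⟩ := hfs'.assoc hg
      exact ⟨v, snoc l₁ s' g v hs' hv, hfv⟩

theorem cons_iff {X Y : L} {f t : X ⟶ Y} {l : List (X ⟶ Y)} :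
    IsSumList Q.toPreSummability (f :: l) t ↔
      ∃ s, IsSumList Q.toPreSummability l s ∧ Q.IsSum f s t :=
  ⟨exists_of_cons, fun ⟨_, hs, hf⟩ => hs.cons hf⟩

theorem unique {X Y : L} {l : List (X ⟶ Y)} {s s' : X ⟶ Y}
    (h : IsSumList Q.toPreSummability l s) (h' : IsSumList Q.toPreSummability l s') :
    s = s' := by
  induction l generalizing s s' with
  | nil => rw [h.eq_zero_of_nil, h'.eq_zero_of_nil]
  | cons f l ih =>
    obtain ⟨u, hu, hfu⟩ := cons_iff.mp h
    obtain ⟨u', hu', hfu'⟩ := cons_iff.mp h'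
    obtain rfl := ih hu hu'
    exact hfu.unique hfu'

theorem perm {X Y : L} {l l' : List (X ⟶ Y)} (hp : l.Perm l') {s : X ⟶ Y}
    (h : IsSumList Q.toPreSummability l s) : IsSumList Q.toPreSummability l' s := by
  induction hp generalizing s with
  | nil => exact h
  | cons f _ ih =>
    obtain ⟨u, hu, hfu⟩ := cons_iff.mp h
    exact (ih hu).cons hfu
  | swap f g l =>
    obtain ⟨u, hu, hgu⟩ := cons_iff.mp h
    obtain ⟨v, hv, hfv⟩ := cons_iff.mp hu
    obtain ⟨w, hgw, hfw⟩ := hfv.left_comm hgu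
    exact (hv.cons hgw).cons hfw
  | trans _ _ ih₁ ih₂ => exact ih₂ (ih₁ h)

end IsSumList

/-- In a summable category, a finite family is summable iff any permutation of
it is summable, and in that case the sums coincide. -/
theorem stmt6 (Q : SummabilityStructure L) {X Y : L}
    (l l' : List (X ⟶ Y)) (hp : l.Perm l') :
    ((∃ s, IsSumList Q.toPreSummability l s) ↔
      (∃ s, IsSumList Q.toPreSummability l' s)) ∧
    (∀ s s', IsSumList Q.toPreSummability l s →
      IsSumList Q.toPreSummability l' s' → s = s') :=
  ⟨⟨fun ⟨s, h⟩ => ⟨s, h.perm hp⟩, fun ⟨s, h⟩ => ⟨s, h.perm hp.symm⟩⟩,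
    fun _ _ h h' => (h.perm hp).unique h'⟩
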